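/- arXiv:2301.10979 — 4 statements merged into one kernel-verified Lean document; each statement's English description precedes it below -/
import Mathlib

section
/- For every integer ℓ ≥ 0 and every real x with x ≤ 2ℓ/e², one has e^x < (1 + e^{-2ℓ}) · E_{2ℓ}(x), where E_n(x) = ∑_{k=0}^{n} x^k/k!. -/
/-!
The function `E_n(x) e^{-x}` has derivative `-x^n e^{-x} / n!`, so for even `n` it is decreasing
and it suffices to prove the inequality at the endpoint `X = n / e²`. There `X ≥ 0`, the tail
`e^X - E_n(X)` of the exponential series is at most twice its first term `X^{n+1} / (n+1)!`,
and `(n+1)! ≥ ((n+1)/e)^{n+1}` bounds that term by `e^{-(n+1)}`. Since `2/e < 1` and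
`E_n(X) ≥ 1`, the tail is below `e^{-n} E_n(X)`.
-/

open Finset Real

theorem Real.abs_exp_sub_sum_range_le {x : ℝ} {n : ℕ} (hx : |x| / n.succ ≤ 1 / 2) :
    |exp x - ∑ m ∈ range n, x ^ m / m.factorial| ≤ |x| ^ n / n.factorial * 2 := by
  have hxc : ‖(x : ℂ)‖ / n.succ ≤ 1 / 2 := mod_cast hx
  convert Complex.exp_bound' hxc <;> norm_cast

theorem pow_div_factorial_le_exp_one_mul_div_pow {x : ℝ} (hx : 0 ≤ x) (m : ℕ) :
    x ^ m / m.factorial ≤ (exp 1 * x / m) ^ m := by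
  rcases Nat.eq_zero_or_pos m with rfl | hm
  · simp
  have hfactorial : (m : ℝ) ^ m / m.factorial ≤ exp 1 ^ m := by
    rw [← exp_nat_mul, mul_one]
    exact pow_div_factorial_le_exp _ (Nat.cast_nonneg m) m
  calc x ^ m / m.factorial = (x / m) ^ m * ((m : ℝ) ^ m / m.factorial) := by
        rw [div_pow]; field_simp
    _ ≤ (x / m) ^ m * exp 1 ^ m := by gcongr
    _ = (exp 1 * x / m) ^ m := by rw [← mul_pow]; ring

noncomputable def truncExp (n : ℕ) (x : ℝ) : ℝ := ∑ k ∈ range (n + 1), x ^ k / k.factorial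

theorem truncExp_zero (x : ℝ) : truncExp 0 x = 1 := by
  simp [truncExp]

theorem truncExp_succ (n : ℕ) (x : ℝ) :
    truncExp (n + 1) x = truncExp n x + x ^ (n + 1) / (n + 1).factorial :=
  sum_range_succ _ _

theorem one_le_truncExp {x : ℝ} (hx : 0 ≤ x) (n : ℕ) : 1 ≤ truncExp n x := by
  unfold truncExp
  simpa using single_le_sum (f := fun k => x ^ k / (k.factorial : ℝ))
    (fun k _ => by positivity) (mem_range.2 n.succ_pos)

theorem hasDerivAt_truncExp (n : ℕ) (x : ℝ) :
    HasDerivAt (truncExp n) (truncExp n x - x ^ n / n.factorial) x := by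
  induction n with
  | zero => simpa [funext truncExp_zero] using hasDerivAt_const x (1 : ℝ)
  | succ n ih =>
    have hterm : HasDerivAt (fun y : ℝ => y ^ (n + 1) / ((n + 1).factorial : ℝ))
        (x ^ n / n.factorial) x := by
      refine ((hasDerivAt_pow (n + 1) x).div_const _).congr_deriv ?_
      rw [Nat.factorial_succ]; push_cast; field_simp
    refine ((ih.add hterm).congr_deriv ?_).congr_of_eventuallyEq
      (Filter.Eventually.of_forall (truncExp_succ n))
    rw [truncExp_succ]; ring

theorem hasDerivAt_truncExp_mul_exp_neg (n : ℕ) (x : ℝ) :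
    HasDerivAt (fun y => truncExp n y * exp (-y)) (-(x ^ n / n.factorial * exp (-x))) x := by
  refine ((hasDerivAt_truncExp n x).mul (hasDerivAt_neg x).exp).congr_deriv ?_
  ring

theorem antitone_truncExp_mul_exp_neg {n : ℕ} (hn : Even n) :
    Antitone (fun x => truncExp n x * exp (-x)) :=
  antitone_of_hasDerivAt_nonpos (hasDerivAt_truncExp_mul_exp_neg n) fun x =>
    neg_nonpos.2 (by have := hn.pow_nonneg x; positivity)

theorem exp_sub_truncExp_le {x : ℝ} (hx : 0 ≤ x) {n : ℕ} (hxn : x ≤ (n + 2) / 2) :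
    exp x - truncExp n x ≤ 2 * (x ^ (n + 1) / (n + 1).factorial) := by
  have h := Real.abs_exp_sub_sum_range_le (x := x) (n := n + 1)
    (by rw [abs_of_nonneg hx, div_le_iff₀ (by positivity)]; push_cast; linarith)
  rw [abs_of_nonneg hx] at h
  exact (le_abs_self _).trans (h.trans_eq (mul_comm _ _))

theorem exp_lt_one_add_exp_neg_mul_truncExp_of_nonneg {n : ℕ} {x : ℝ} (hx : 0 ≤ x)
    (hxn : x ≤ n / exp 1 ^ 2) :
    exp x < (1 + exp (-n)) * truncExp n x := by
  have he : 2 < exp 1 := lt_trans (by norm_num) exp_one_gt_d9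
  have hhalf : x ≤ (n + 2) / 2 :=
    calc x ≤ n / exp 1 ^ 2 := hxn
      _ ≤ n / 2 := by gcongr; nlinarith
      _ ≤ (n + 2) / 2 := by linarith
  have hratio : exp 1 * x / (n + 1) ≤ exp (-1) :=
    calc exp 1 * x / (n + 1) ≤ exp 1 * (n / exp 1 ^ 2) / (n + 1) := by gcongr
      _ = n / (n + 1) * (exp 1)⁻¹ := by field_simp
      _ ≤ exp (-1) := by
        rw [exp_neg]
        exact mul_le_of_le_one_left (by positivity)
          (div_le_one_of_le₀ (by linarith) (by positivity))
  have hterm : x ^ (n + 1) / (n + 1).factorial ≤ exp (-n) * exp (-1) :=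
    calc x ^ (n + 1) / (n + 1).factorial ≤ (exp 1 * x / (n + 1 : ℕ)) ^ (n + 1) :=
          pow_div_factorial_le_exp_one_mul_div_pow hx (n + 1)
      _ ≤ exp (-1) ^ (n + 1) := by push_cast; gcongr
      _ = exp (-n) * exp (-1) := by rw [← exp_nat_mul, ← exp_add]; push_cast; ring_nf
  have htwo : 2 * exp (-1) < 1 := by
    rw [exp_neg, ← div_eq_mul_inv, div_lt_one (by positivity)]; exact he
  calc exp x ≤ truncExp n x + 2 * (exp (-n) * exp (-1)) := by
        linarith [exp_sub_truncExp_le hx hhalf]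
    _ < truncExp n x + exp (-n) := by nlinarith [exp_pos (-n)]
    _ ≤ (1 + exp (-n)) * truncExp n x := by
        nlinarith [one_le_truncExp hx n, exp_pos (-n)]

theorem exp_lt_iff_one_lt_mul_exp_neg {y a : ℝ} : exp y < a ↔ 1 < a * exp (-y) := by
  rw [exp_neg, ← div_eq_mul_inv, one_lt_div (exp_pos y)]

theorem exp_lt_one_add_exp_neg_mul_truncExp {n : ℕ} (hn : Even n) {x : ℝ}
    (hxn : x ≤ n / exp 1 ^ 2) :
    exp x < (1 + exp (-n)) * truncExp n x := by
  have hend := exp_lt_one_add_exp_neg_mul_truncExp_of_nonneg (x := n / exp 1 ^ 2)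
    (by positivity) le_rfl
  rw [exp_lt_iff_one_lt_mul_exp_neg, mul_assoc] at hend ⊢
  exact hend.trans_le
    (mul_le_mul_of_nonneg_left (antitone_truncExp_mul_exp_neg hn hxn) (by positivity))

open Finset in
/-- For every `ℓ ≥ 0` and real `x ≤ 2ℓ/e²`,
`e^x < (1 + e^{-2ℓ}) E_{2ℓ}(x)`. -/
theorem exp_lt_truncated_exp (ℓ : ℕ) (x : ℝ)
    (hx : x ≤ 2 * ℓ / (Real.exp 1) ^ 2) :
    Real.exp x <
      (1 + Real.exp (-(2 * ℓ : ℝ))) *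
        ∑ k ∈ Finset.range (2 * ℓ + 1), x ^ k / (k.factorial : ℝ) := by
  have h := exp_lt_one_add_exp_neg_mul_truncExp (even_two_mul ℓ) (x := x) (by push_cast; exact hx)
  push_cast at h
  exact h
end

section
/- For all n ≥ 1, (n/e)^n √(2πn) exp(1/(12n+1)) < n! < (n/e)^n √(2πn) exp(1/(12n)). -/
/-!
Robbins' argument. The sequence `s_n = n! / (√(2n) (n/e)^n)` (`Stirling.stirlingSeq`) tends to `√π`,
and `log s_n - log s_(n+1) = ∑_(k ≥ 1) r^k / (2k + 1)` with `r = (2n + 1)⁻²`. Comparing this series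
with its first term and with the geometric series `∑ r^k / 3` traps the difference strictly between
`1/(12n + 1) - 1/(12(n + 1) + 1)` and `1/(12n) - 1/(12(n + 1))`. So `log s_n - 1/(12n)` increases
strictly and `log s_n - 1/(12n + 1)` decreases strictly, both towards `log √π`.
-/

open Real Filter Topology Stirling
open scoped Nat

theorem StrictMono.lt_of_tendsto {α β : Type*} [TopologicalSpace α] [Preorder α]
    [OrderClosedTopology α] [PartialOrder β] [IsDirectedOrder β] [NoMaxOrder β]
    {f : β → α} {a : α}
    (hf : StrictMono f) (ha : Tendsto f atTop (𝓝 a)) (b : β) : f b < a := by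
  obtain ⟨c, hc⟩ := exists_gt b
  exact (hf hc).trans_le (hf.monotone.ge_of_tendsto ha c)

theorem StrictAnti.lt_of_tendsto {α β : Type*} [TopologicalSpace α] [Preorder α]
    [OrderClosedTopology α] [PartialOrder β] [IsDirectedOrder β] [NoMaxOrder β]
    {f : β → α} {a : α}
    (hf : StrictAnti f) (ha : Tendsto f atTop (𝓝 a)) (b : β) : a < f b := by
  obtain ⟨c, hc⟩ := exists_gt b
  exact (hf.antitone.le_of_tendsto ha c).trans_lt (hf hc)

section OddPowerSeries

variable {r s : ℝ}

theorem div_three_lt_of_hasSum_pow_div_odd (hr : 0 < r)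
    (hs : HasSum (fun k : ℕ => 1 / (2 * ((k + 1 : ℕ) : ℝ) + 1) * r ^ (k + 1)) s) :
    r / 3 < s := by
  have hfirst : HasSum (fun k : ℕ => if k = 0 then r / 3 else 0) (r / 3) := hasSum_ite_eq 0 _
  refine hasSum_lt (i := 1) (fun k => ?_) (by rw [if_neg one_ne_zero]; positivity)
    hfirst hs
  rcases k with _ | k
  · norm_num [div_eq_inv_mul]
  · simp only [Nat.add_one_ne_zero, if_false]; positivity

theorem lt_div_three_mul_one_sub_of_hasSum_pow_div_odd (hr₀ : 0 < r) (hr₁ : r < 1)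
    (hs : HasSum (fun k : ℕ => 1 / (2 * ((k + 1 : ℕ) : ℝ) + 1) * r ^ (k + 1)) s) :
    s < r / (3 * (1 - r)) := by
  have hgeom : HasSum (fun k : ℕ => 1 / 3 * r ^ (k + 1)) (r / (3 * (1 - r))) := by
    have h := (hasSum_geometric_of_lt_one hr₀.le hr₁).mul_left (r / 3)
    rwa [← div_eq_mul_inv, div_div,
      show (fun k : ℕ => r / 3 * r ^ k) = fun k => 1 / 3 * r ^ (k + 1) from
        funext fun k => by ring] at h
  refine hasSum_lt (i := 1) (fun k => ?_) ?_ hs hgeom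
  · gcongr
    push_cast
    linarith [k.cast_nonneg (α := ℝ)]
  · gcongr; norm_num

end OddPowerSeries

theorem log_stirlingSeq_sdiff_mem_Ioo {n : ℕ} (hn : n ≠ 0) :
    log (stirlingSeq n) - log (stirlingSeq (n + 1)) ∈
      Set.Ioo (1 / (3 * (2 * n + 1) ^ 2 : ℝ)) (1 / (12 * n * (n + 1))) := by
  obtain ⟨m, rfl⟩ := Nat.exists_eq_succ_of_ne_zero hn
  have hs := log_stirlingSeq_sdiff_hasSum m
  set r : ℝ := (1 / (2 * ↑(m + 1) + 1)) ^ 2 with hr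
  have hr₀ : 0 < r := by positivity
  have hr₁ : r < 1 := by
    rw [hr, div_pow, one_pow, div_lt_one (by positivity)]
    push_cast
    nlinarith [m.cast_nonneg (α := ℝ)]
  refine ⟨(div_three_lt_of_hasSum_pow_div_odd hr₀ hs).trans_eq' ?_,
    (lt_div_three_mul_one_sub_of_hasSum_pow_div_odd hr₀ hr₁ hs).trans_eq ?_⟩
  · rw [hr]; push_cast; field_simp
  · have h1r : 1 - r =
        4 * ((m + 1 : ℕ) : ℝ) * ((m + 1 : ℕ) + 1) / (2 * ↑(m + 1) + 1) ^ 2 := by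
      rw [hr]; field_simp; ring
    rw [h1r, hr]
    field_simp
    norm_num

theorem tendsto_one_div_twelve_mul_succ_add (b : ℝ) :
    Tendsto (fun n : ℕ => 1 / (12 * ((n + 1 : ℕ) : ℝ) + b)) atTop (𝓝 0) := by
  simp only [one_div]
  refine (tendsto_atTop_add_const_right _ b ?_).inv_tendsto_atTop
  exact (tendsto_natCast_atTop_atTop.comp (tendsto_add_atTop_nat 1)).const_mul_atTop (by norm_num)

theorem tendsto_log_stirlingSeq_succ_sub {f : ℕ → ℝ} (hf : Tendsto f atTop (𝓝 0)) :
    Tendsto (fun n => log (stirlingSeq (n + 1)) - f n) atTop (𝓝 (log √π)) := by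
  have hlog := tendsto_stirlingSeq_sqrt_pi.log (by positivity)
  simpa only [sub_zero, Function.comp_def] using (hlog.comp (tendsto_add_atTop_nat 1)).sub hf

theorem strictMono_log_stirlingSeq_sub_inv_twelve_mul :
    StrictMono fun n : ℕ => log (stirlingSeq (n + 1)) - 1 / (12 * ((n + 1 : ℕ) : ℝ)) := by
  refine strictMono_nat_of_lt_succ fun n => ?_
  have h := (log_stirlingSeq_sdiff_mem_Ioo n.succ_ne_zero).2
  have hsplit : 1 / (12 * ((n + 1 : ℕ) : ℝ) * ((n + 1 : ℕ) + 1)) =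
      1 / (12 * ((n + 1 : ℕ) : ℝ)) - 1 / (12 * ((n + 1 + 1 : ℕ) : ℝ)) := by
    push_cast; field_simp; ring
  linarith

theorem strictAnti_log_stirlingSeq_sub_inv_twelve_mul_add_one :
    StrictAnti fun n : ℕ => log (stirlingSeq (n + 1)) - 1 / (12 * ((n + 1 : ℕ) : ℝ) + 1) := by
  refine strictAnti_nat_of_succ_lt fun n => ?_
  have h := (log_stirlingSeq_sdiff_mem_Ioo n.succ_ne_zero).1
  -- after clearing denominators this is `24 (n + 1) > 23`
  have hgap : 1 / (12 * ((n + 1 : ℕ) : ℝ) + 1) - 1 / (12 * ((n + 1 + 1 : ℕ) : ℝ) + 1) <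
      1 / (3 * (2 * ((n + 1 : ℕ) : ℝ) + 1) ^ 2) := by
    rw [div_sub_div _ _ (by positivity) (by positivity),
      div_lt_div_iff₀ (by positivity) (by positivity)]
    push_cast
    nlinarith [n.cast_nonneg (α := ℝ)]
  linarith

theorem stirlingSeq_lt_sqrt_pi_mul_exp {n : ℕ} (hn : n ≠ 0) :
    stirlingSeq n < √π * exp (1 / (12 * n)) := by
  obtain ⟨m, rfl⟩ := Nat.exists_eq_succ_of_ne_zero hn
  have h := strictMono_log_stirlingSeq_sub_inv_twelve_mul.lt_of_tendsto
    (tendsto_log_stirlingSeq_succ_sub (by simpa using tendsto_one_div_twelve_mul_succ_add 0)) m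
  rw [← exp_log (stirlingSeq'_pos m), ← exp_log (by positivity : 0 < √π), ← exp_add,
    exp_lt_exp]
  linarith

theorem sqrt_pi_mul_exp_lt_stirlingSeq {n : ℕ} (hn : n ≠ 0) :
    √π * exp (1 / (12 * n + 1)) < stirlingSeq n := by
  obtain ⟨m, rfl⟩ := Nat.exists_eq_succ_of_ne_zero hn
  have h := strictAnti_log_stirlingSeq_sub_inv_twelve_mul_add_one.lt_of_tendsto
    (tendsto_log_stirlingSeq_succ_sub (tendsto_one_div_twelve_mul_succ_add 1)) m
  rw [← exp_log (stirlingSeq'_pos m), ← exp_log (by positivity : 0 < √π), ← exp_add,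
    exp_lt_exp]
  linarith

theorem factorial_eq_stirlingSeq_mul {n : ℕ} (hn : n ≠ 0) :
    (n ! : ℝ) = stirlingSeq n * (√(2 * n) * (n / exp 1) ^ n) := by
  obtain ⟨m, rfl⟩ := Nat.exists_eq_succ_of_ne_zero hn
  rw [stirlingSeq, div_mul_cancel₀]
  positivity

/-- Robbins' form of Stirling's formula: for `n ≥ 1`,
`(n/e)^n √(2πn) e^{1/(12n+1)} < n! < (n/e)^n √(2πn) e^{1/(12n)}`. -/
theorem stirling_bounds (n : ℕ) (hn : 1 ≤ n) :
    ((n : ℝ) / Real.exp 1) ^ n * Real.sqrt (2 * Real.pi * n) *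
        Real.exp (1 / (12 * n + 1)) < (n.factorial : ℝ) ∧
    (n.factorial : ℝ) < ((n : ℝ) / Real.exp 1) ^ n * Real.sqrt (2 * Real.pi * n) *
        Real.exp (1 / (12 * n)) := by
  have hn₀ : n ≠ 0 := Nat.one_le_iff_ne_zero.mp hn
  have hsqrt : √(2 * π * n) = √π * √(2 * n) := by
    rw [← sqrt_mul pi_pos.le, mul_left_comm, mul_assoc]
  rw [factorial_eq_stirlingSeq_mul hn₀, hsqrt]
  constructor
  · calc _ = √π * exp (1 / (12 * n + 1)) * (√(2 * n) * (n / exp 1) ^ n) := by ring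
      _ < _ := by gcongr; exact sqrt_pi_mul_exp_lt_stirlingSeq hn₀
  · calc _ < √π * exp (1 / (12 * n)) * (√(2 * n) * (n / exp 1) ^ n) := by
          gcongr; exact stirlingSeq_lt_sqrt_pi_mul_exp hn₀
      _ = _ := by ring
end

section
/- Let n be a positive even integer. Then ∑_{0 ≤ m ≤ n+1, 3 | (n+1+m)} 1/(m!·(n+1-m)!) ≤ ∑_{0 ≤ m ≤ n, 3 | (n+m)} 1/(m!·(n-m)!). -/
/-!
Multiplying by factorials, with `s N = ∑_{3 ∣ N + m} (N choose m)` the claim becomes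
`s (n + 1) ≤ (n + 1) * s n`. Pascal's rule writes `s (n + 1)` as the sum of `n choose m` over the
two residue classes of `m` other than the one defining `s n`, so `s (n + 1) + s n = 2 ^ n`.
For `n = 2k` the class defining `s n` contains the central coefficient, and
`4 ^ k ≤ (2k + 1) * (2k choose k)`.
-/
open Finset

def chooseSumDvd (d N a : ℕ) : ℕ := ∑ m ∈ range (N + 1) with d ∣ a + m, N.choose m

theorem card_filter_range_dvd_add {d : ℕ} (hd : 0 < d) (a : ℕ) :
    #{i ∈ range d | d ∣ a + i} = 1 := by
  have := NeZero.of_pos hd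
  rw [card_eq_one]
  refine ⟨(-(a : ZMod d)).val, eq_singleton_iff_unique_mem.2 ⟨?_, fun i hi => ?_⟩⟩
  · simp only [mem_filter, mem_range, ZMod.val_lt, true_and]
    rw [← ZMod.natCast_eq_zero_iff]
    push_cast
    rw [ZMod.natCast_zmod_val, add_neg_cancel]
  · simp only [mem_filter, mem_range] at hi
    rw [← ZMod.natCast_eq_zero_iff, Nat.cast_add, add_eq_zero_iff_neg_eq'] at hi
    rw [← hi.2, neg_neg, ZMod.val_natCast_of_lt hi.1]

theorem chooseSumDvd_succ (d N a : ℕ) :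
    chooseSumDvd d (N + 1) a = chooseSumDvd d N a + chooseSumDvd d N (a + 1) := by
  have h := sum_choose_succ_nsmul (fun i _ => if d ∣ a + i then 1 else 0) N
  simp only [smul_eq_mul, mul_ite, mul_one, mul_zero] at h
  simpa only [chooseSumDvd, sum_filter, add_assoc, add_comm 1] using h

theorem sum_range_chooseSumDvd {d : ℕ} (hd : 0 < d) (N a : ℕ) :
    ∑ i ∈ range d, chooseSumDvd d N (a + i) = 2 ^ N := by
  simp only [chooseSumDvd, sum_filter]
  rw [sum_comm, ← Nat.sum_range_choose]
  refine sum_congr rfl fun m _ => ?_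
  rw [← sum_filter, sum_const, smul_eq_mul]
  simp only [add_right_comm a _ m]
  rw [card_filter_range_dvd_add hd, one_mul]

theorem chooseSumDvd_succ_add_chooseSumDvd_three (n : ℕ) :
    chooseSumDvd 3 (n + 1) (n + 1) + chooseSumDvd 3 n n = 2 ^ n := by
  rw [← sum_range_chooseSumDvd (d := 3) (by norm_num) n n, chooseSumDvd_succ, sum_range_succ,
    sum_range_succ, sum_range_one, add_zero, add_assoc n 1 1]
  ring

theorem choose_le_chooseSumDvd_three (k : ℕ) :
    (2 * k).choose k ≤ chooseSumDvd 3 (2 * k) (2 * k) :=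
  single_le_sum (f := fun m => (2 * k).choose m) (fun _ _ => Nat.zero_le _)
    (mem_filter.2 ⟨mem_range.2 (by omega), ⟨k, by ring⟩⟩)

theorem two_pow_le_mul_chooseSumDvd_three {n : ℕ} (hn : Even n) :
    2 ^ n ≤ (n + 1) * chooseSumDvd 3 n n := by
  obtain ⟨k, rfl⟩ := hn
  rw [← two_mul, pow_mul]
  calc (2 ^ 2) ^ k = 4 ^ k := by norm_num
    _ ≤ (2 * k + 1) * (2 * k).choose k := Nat.four_pow_le_two_mul_add_one_mul_central_binom k
    _ ≤ (2 * k + 1) * chooseSumDvd 3 (2 * k) (2 * k) := by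
      gcongr; exact choose_le_chooseSumDvd_three k

theorem chooseSumDvd_three_succ_le {n : ℕ} (hn : Even n) :
    chooseSumDvd 3 (n + 1) (n + 1) ≤ (n + 1) * chooseSumDvd 3 n n := by
  have hsum := chooseSumDvd_succ_add_chooseSumDvd_three n
  have hpow := two_pow_le_mul_chooseSumDvd_three hn
  omega

theorem sum_filter_one_div_factorial_mul_factorial (p : ℕ → Prop) [DecidablePred p] (N : ℕ) :
    ∑ m ∈ range (N + 1) with p m, (1 : ℝ) / (m.factorial * (N - m).factorial) =
      (∑ m ∈ range (N + 1) with p m, N.choose m : ℕ) / N.factorial := by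
  push_cast
  rw [sum_div]
  refine sum_congr rfl fun m hm => ?_
  rw [Nat.cast_choose ℝ (Nat.lt_succ_iff.1 (mem_range.1 (mem_filter.1 hm).1))]
  field_simp

open Finset in
theorem factorial_sum_three_dvd_even_general (n : ℕ) (heven : Even n) :
    ∑ m ∈ (Finset.range (n + 2)).filter (fun m => 3 ∣ n + 1 + m),
        (1 : ℝ) / (m.factorial * (n + 1 - m).factorial) ≤
      ∑ m ∈ (Finset.range (n + 1)).filter (fun m => 3 ∣ n + m),
        (1 : ℝ) / (m.factorial * (n - m).factorial) := by
  rw [sum_filter_one_div_factorial_mul_factorial _ (n + 1),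
    sum_filter_one_div_factorial_mul_factorial, Nat.factorial_succ, Nat.cast_mul,
    div_le_div_iff₀ (by positivity) (by positivity)]
  exact_mod_cast (Nat.mul_le_mul_right n.factorial (chooseSumDvd_three_succ_le heven)).trans_eq
    (by rw [chooseSumDvd]; ring)

open Finset in
/-- For a positive even integer `n`,
`∑_{0 ≤ m ≤ n+1, 3 ∣ n+1+m} 1/(m!(n+1-m)!) ≤ ∑_{0 ≤ m ≤ n, 3 ∣ n+m} 1/(m!(n-m)!)`. -/
theorem factorial_sum_three_dvd_even (n : ℕ) (hpos : 0 < n) (heven : Even n) :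
    ∑ m ∈ (Finset.range (n + 2)).filter (fun m => 3 ∣ n + 1 + m),
        (1 : ℝ) / (m.factorial * (n + 1 - m).factorial) ≤
      ∑ m ∈ (Finset.range (n + 1)).filter (fun m => 3 ∣ n + m),
        (1 : ℝ) / (m.factorial * (n - m).factorial) :=
  factorial_sum_three_dvd_even_general n heven
end

section
/- Let n ≥ 3 be an odd integer. Then ∑_{0 ≤ m ≤ n+1, 3 | (n+1+m)} 1/(m!·(n+1-m)!) ≤ ∑_{0 ≤ m ≤ n, 3 | (n+m)} 1/(m!·(n-m)!). -/
/-!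
Multiplying by `n!` turns each side into a trisected binomial sum
`S n = ∑_{m ≤ n, 3 ∣ n + m} C(n, m)`. Pascal's rule gives `S n + S (n + 1) = 2 ^ n`, hence
`3 S n = 2 ^ n + 2 (-1) ^ n`, and for odd `n ≥ 3` the claim `S (n + 1) ≤ (n + 1) S n` reduces to
`2 ^ (n + 1) + 2 ≤ (n + 1) (2 ^ n - 2)`.
-/

open Finset Nat

theorem sum_filter_one_div_factorial_mul_factorial_s12 {K : Type*} [Field K] [CharZero K]
    (n : ℕ) (p : ℕ → Prop) [DecidablePred p] :
    ∑ m ∈ (range (n + 1)).filter p, (1 : K) / (m ! * (n - m)!) =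
      (∑ m ∈ (range (n + 1)).filter p, n.choose m : ℕ) / n ! := by
  rw [Nat.cast_sum, sum_div]
  refine sum_congr rfl fun m hm => ?_
  have hmn : m ≤ n := Nat.lt_succ_iff.mp (mem_range.mp (mem_filter.mp hm).1)
  have hfac : (n ! : K) ≠ 0 := Nat.cast_ne_zero.mpr (factorial_ne_zero n)
  rw [Nat.cast_choose K hmn]
  field_simp

def binomSumThreeDvd (n : ℕ) : ℕ :=
  ∑ m ∈ (range (n + 1)).filter (fun m => 3 ∣ n + m), n.choose m

theorem binomSumThreeDvd_eq_sum_mul_ite (n : ℕ) :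
    binomSumThreeDvd n = ∑ m ∈ range (n + 1), n.choose m * if 3 ∣ n + m then 1 else 0 := by
  simp only [binomSumThreeDvd, sum_filter, mul_boole]

theorem binomSumThreeDvd_add_binomSumThreeDvd_succ (n : ℕ) :
    binomSumThreeDvd n + binomSumThreeDvd (n + 1) = 2 ^ n := by
  have pascal := sum_choose_succ_mul (R := ℕ) (fun m _ => if 3 ∣ n + 1 + m then 1 else 0) n
  simp only [Nat.cast_id] at pascal
  rw [binomSumThreeDvd_eq_sum_mul_ite, binomSumThreeDvd_eq_sum_mul_ite, pascal,
    ← sum_range_choose, ← sum_add_distrib, ← sum_add_distrib]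
  refine sum_congr rfl fun m _ => ?_
  -- exactly one of `n + m`, `n + m + 1`, `n + m + 2` is divisible by 3
  split_ifs <;> omega

theorem three_mul_binomSumThreeDvd (n : ℕ) :
    3 * (binomSumThreeDvd n : ℤ) = 2 ^ n + 2 * (-1) ^ n := by
  induction n with
  | zero => decide
  | succ n ih =>
    have h := binomSumThreeDvd_add_binomSumThreeDvd_succ n
    zify at h
    rw [pow_succ, pow_succ]
    linarith

theorem binomSumThreeDvd_succ_le_of_odd {n : ℕ} (hn : 3 ≤ n) (hodd : Odd n) :
    binomSumThreeDvd (n + 1) ≤ (n + 1) * binomSumThreeDvd n := by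
  have hS := three_mul_binomSumThreeDvd n
  have hS' := three_mul_binomSumThreeDvd (n + 1)
  rw [hodd.neg_one_pow] at hS
  rw [(hodd.add_one).neg_one_pow] at hS'
  have h8 : (8 : ℤ) ≤ 2 ^ n := by
    calc (8 : ℤ) = 2 ^ 3 := by norm_num
      _ ≤ 2 ^ n := pow_le_pow_right₀ (by norm_num) hn
  have hn' : (3 : ℤ) ≤ n := by exact_mod_cast hn
  zify
  rw [pow_succ] at hS'
  nlinarith

open Finset in
/-- For an odd integer `n ≥ 3`,
`∑_{0 ≤ m ≤ n+1, 3 ∣ n+1+m} 1/(m!(n+1-m)!) ≤ ∑_{0 ≤ m ≤ n, 3 ∣ n+m} 1/(m!(n-m)!)`. -/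
theorem factorial_sum_three_dvd_odd (n : ℕ) (hn : 3 ≤ n) (hodd : Odd n) :
    ∑ m ∈ (Finset.range (n + 2)).filter (fun m => 3 ∣ n + 1 + m),
        (1 : ℝ) / (m.factorial * (n + 1 - m).factorial) ≤
      ∑ m ∈ (Finset.range (n + 1)).filter (fun m => 3 ∣ n + m),
        (1 : ℝ) / (m.factorial * (n - m).factorial) := by
  rw [sum_filter_one_div_factorial_mul_factorial_s12 (n + 1),
    sum_filter_one_div_factorial_mul_factorial_s12 n]
  change (binomSumThreeDvd (n + 1) : ℝ) / (n + 1)! ≤ binomSumThreeDvd n / (n ! : ℝ)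
  rw [Nat.factorial_succ, Nat.cast_mul, div_le_div_iff₀ (by positivity) (by positivity)]
  have key : (binomSumThreeDvd (n + 1) : ℝ) ≤ (n + 1) * binomSumThreeDvd n := by
    exact_mod_cast binomSumThreeDvd_succ_le_of_odd hn hodd
  calc (binomSumThreeDvd (n + 1) : ℝ) * n ! ≤ (n + 1) * binomSumThreeDvd n * n ! := by gcongr
    _ = _ := by push_cast; ring
end
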